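/- arXiv:2412.09121 — 2 statements merged into one kernel-verified Lean document; each statement's English description precedes it below -/
import Mathlib

section
/- Let X and Z be metric spaces, let g : X → Z be a continuous function, let H_X and H_Z be real Hilbert spaces, and let φ_X : X → H_X and φ_Z : Z → H_Z be feature maps whose associated kernels K_X(x,x') = ⟨φ_X(x), φ_X(x')⟩ and K_Z(z,z') = ⟨φ_Z(z), φ_Z(z')⟩ are continuous and bounded. Assume the kernel K_X metrizes weak convergence of probability measures on X, in the sense that for any sequence of Borel probability measures (Q_N) and limit Q, mean-embedding convergence ‖μ_X[Q_N] − μ_X[Q]‖_{H_X} → 0 holds if and only if Q_N converges weakly to Q. Then for any sequence of Borel probability measures (P_N) on X and Borel probability measure P on X, if ‖μ_X[P_N] − μ_X[P]‖_{H_X} → 0 as N → ∞, then ‖μ_Z[g_*P_N] − μ_Z[g_*P]‖_{H_Z} → 0, where g_*P denotes the pushforward of P under g. -/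
open MeasureTheory Filter Topology Set TopologicalSpace BoundedContinuousFunction
open scoped ENNReal RealInnerProductSpace

/-!
Weak convergence `P_N → P` follows from the metrizing hypothesis and survives pushing forward
along the continuous map `g`; for a bounded continuous feature map, weak convergence implies norm
convergence of the mean embeddings. For the embeddings of `g_*P_N` to be genuine Bochner
integrals, every probability measure on `X` must be carried by a separable set. The metrizing
hypothesis forces this as well: it makes `φX` a.e. strongly measurable and makes `φX` reflect
convergence of sequences, so preimages of separable sets are separable.
-/

theorem continuous_of_continuous_inner {T H : Type*} [TopologicalSpace T] [NormedAddCommGroup H]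
    [InnerProductSpace ℝ H] {φ : T → H}
    (hK : Continuous fun p : T × T => ⟪φ p.1, φ p.2⟫) : Continuous φ := by
  refine continuous_iff_continuousAt.2 fun z => tendsto_iff_norm_sub_tendsto_zero.2 ?_
  have hdiag : Continuous fun w => ⟪φ w, φ w⟫ := hK.comp (continuous_id.prodMk continuous_id)
  have hz : Continuous fun w => ⟪φ w, φ z⟫ := hK.comp (continuous_id.prodMk continuous_const)
  have hsq : Continuous fun w => ‖φ w - φ z‖ ^ 2 := by
    simp_rw [norm_sub_sq_real, ← real_inner_self_eq_norm_sq]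
    exact (hdiag.sub (hz.const_mul 2)).add continuous_const
  simpa [Real.sqrt_sq (norm_nonneg _)] using (hsq.tendsto z).sqrt

theorem isSeparable_preimage_of_tendsto_comp {X Y : Type*} [TopologicalSpace X]
    [TopologicalSpace Y] [PseudoMetrizableSpace Y] {f : X → Y}
    (hf : ∀ (w : ℕ → X) (x : X), Tendsto (f ∘ w) atTop (𝓝 (f x)) → Tendsto w atTop (𝓝 x))
    {T : Set Y} (hT : IsSeparable T) : IsSeparable (f ⁻¹' T) := by
  obtain ⟨D, hD, hDc, hTD⟩ := (hT.mono (image_preimage_subset f T)).exists_countable_dense_subset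
  have : ∀ d : D, ∃ x, f x = d := fun d => (hD d.2).imp fun _ h => h.2
  choose g hg using this
  have := hDc.to_subtype
  refine ⟨range g, countable_range g, fun x hx => ?_⟩
  obtain ⟨d, hdD, hd⟩ := mem_closure_iff_seq_limit.1 (hTD (mem_image_of_mem f hx))
  have hfd : f ∘ (fun n => g ⟨d n, hdD n⟩) = d := funext fun n => hg _
  exact mem_closure_of_tendsto (hf _ x (hfd ▸ hd)) (.of_forall fun n => mem_range_self _)

theorem Continuous.integrable_of_ae_mem_isSeparable {α E : Type*} [TopologicalSpace α]
    [PseudoMetrizableSpace α] [MeasurableSpace α] [OpensMeasurableSpace α] [NormedAddCommGroup E]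
    {μ : Measure α} [IsFiniteMeasure μ] {f : α → E} (hf : Continuous f) {C : ℝ}
    (hfC : ∀ x, ‖f x‖ ≤ C) {S : Set α} (hS : IsSeparable S) (hμS : ∀ᵐ x ∂μ, x ∈ S) :
    Integrable f μ := by
  have hμ : μ.restrict (closure S) = μ :=
    Measure.restrict_eq_self_of_ae_mem (hμS.mono fun x hx => subset_closure hx)
  have hfμ := hf.continuousOn.aestronglyMeasurable_of_isSeparable (μ := μ)
    isClosed_closure.measurableSet hS.closure
  rw [hμ] at hfμ
  exact .of_bound hfμ C (ae_of_all _ hfC)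

theorem Equicontinuous.continuous_iSup {ι α : Type*} [TopologicalSpace α] [Nonempty ι]
    {F : ι → α → ℝ} (hF : Equicontinuous F) (hb : ∀ x, BddAbove (range fun i => F i x)) :
    Continuous fun x => ⨆ i, F i x := by
  refine continuous_iff_continuousAt.2 fun x => Metric.tendsto_nhds.2 fun ε hε => ?_
  have hle : ∀ y y', (∀ i, |F i y - F i y'| < ε / 2) → ⨆ i, F i y ≤ (⨆ i, F i y') + ε / 2 :=
    fun y y' h => ciSup_le fun i => by
      linarith [(abs_lt.1 (h i)).2, le_ciSup (hb y') i]
  filter_upwards [Metric.equicontinuousAt_iff_right.1 (hF x) (ε / 2) (half_pos hε)] with y hy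
  have hyx : ∀ i, |F i y - F i x| < ε / 2 := fun i => by rw [← Real.dist_eq, dist_comm]; exact hy i
  have hxy : ∀ i, |F i x - F i y| < ε / 2 := fun i => by rw [← Real.dist_eq]; exact hy i
  rw [Real.dist_eq, abs_sub_lt_iff]
  constructor <;> linarith [hle y x hyx, hle x y hxy]

namespace MeasureTheory.ProbabilityMeasure

variable {Ω : Type*} [TopologicalSpace Ω] [MeasurableSpace Ω] [OpensMeasurableSpace Ω]
  {QN : ℕ → ProbabilityMeasure Ω} {Q : ProbabilityMeasure Ω}

/-- For `N ≥ k`, `f N` is dominated by the envelope `⨆ n ≥ k, f n`: it is continuous by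
equicontinuity, so weak convergence applies to it, and it decreases pointwise to `0`. -/
theorem tendsto_integral_of_equicontinuous (hQ : Tendsto QN atTop (𝓝 Q))
    {f : ℕ → Ω → ℝ} (hf : Equicontinuous f) {C : ℝ} (hf0 : ∀ N z, 0 ≤ f N z)
    (hfC : ∀ N z, f N z ≤ C) (hlim : ∀ z, Tendsto (fun N => f N z) atTop (𝓝 0)) :
    Tendsto (fun N => ∫ z, f N z ∂(QN N : Measure Ω)) atTop (𝓝 0) := by
  set u : ℕ → Ω → ℝ := fun k z => ⨆ n, f (n + k) z
  have hbdd : ∀ k z, BddAbove (range fun n => f (n + k) z) :=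
    fun k z => ⟨C, forall_mem_range.2 fun n => hfC _ _⟩
  have hle_u : ∀ k N z, k ≤ N → f N z ≤ u k z := fun k N z hkN => by
    simpa [Nat.sub_add_cancel hkN] using le_ciSup (hbdd k z) (N - k)
  have hu0 : ∀ k z, 0 ≤ u k z := fun k z => (hf0 k z).trans (hle_u k k z le_rfl)
  have hu_norm : ∀ k z, ‖u k z‖ ≤ C := fun k z => by
    rw [Real.norm_of_nonneg (hu0 k z)]; exact ciSup_le fun n => hfC _ _
  let U : ℕ → Ω →ᵇ ℝ := fun k =>
    .ofNormedAddCommGroup (u k) ((hf.comp (· + k)).continuous_iSup (hbdd k)) C (hu_norm k)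
  have hu_lim : ∀ z, Tendsto (fun k => u k z) atTop (𝓝 0) := fun z => by
    refine tendsto_order.2 ⟨fun a ha => .of_forall fun k => ha.trans_le (hu0 k z), fun a ha => ?_⟩
    obtain ⟨K, hK⟩ := eventually_atTop.1 ((hlim z).eventually (gt_mem_nhds (half_pos ha)))
    filter_upwards [eventually_ge_atTop K] with k hk
    exact (ciSup_le fun n => (hK _ (by omega)).le).trans_lt (half_lt_self ha)
  have hQ_u : Tendsto (fun k => ∫ z, U k z ∂(Q : Measure Ω)) atTop (𝓝 0) := by
    simpa using tendsto_integral_of_dominated_convergence (fun _ => C)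
      (fun k => (U k).continuous.aestronglyMeasurable) (integrable_const C)
      (fun k => ae_of_all _ (hu_norm k)) (ae_of_all _ hu_lim)
  have hQN_u : ∀ k, Tendsto (fun N => ∫ z, U k z ∂(QN N : Measure Ω)) atTop
      (𝓝 (∫ z, U k z ∂(Q : Measure Ω))) :=
    fun k => ProbabilityMeasure.tendsto_iff_forall_integral_tendsto.1 hQ (U k)
  refine tendsto_order.2
    ⟨fun a ha => .of_forall fun N => ha.trans_le (integral_nonneg (hf0 N)), fun a ha => ?_⟩
  obtain ⟨k, hk⟩ := (hQ_u.eventually (gt_mem_nhds ha)).exists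
  filter_upwards [(hQN_u k).eventually (gt_mem_nhds hk), eventually_ge_atTop k] with N hN hkN
  exact (integral_mono_of_nonneg (ae_of_all _ (hf0 N)) ((U k).integrable _)
    (ae_of_all _ fun z => hle_u k N z hkN)).trans_lt hN

variable {H : Type*} [NormedAddCommGroup H] [InnerProductSpace ℝ H] {φ : Ω → H} {s : ℝ}

theorem tendsto_inner_integral [CompleteSpace H] (hQ : Tendsto QN atTop (𝓝 Q))
    (hφ : Continuous φ) (hs : ∀ z, ‖φ z‖ ≤ s) (hint : ∀ N, Integrable φ (QN N : Measure Ω))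
    (hintQ : Integrable φ (Q : Measure Ω)) (v : H) :
    Tendsto (fun N => ⟪v, ∫ z, φ z ∂(QN N : Measure Ω)⟫) atTop
      (𝓝 ⟪v, ∫ z, φ z ∂(Q : Measure Ω)⟫) := by
  have hb : ∀ z, ‖⟪v, φ z⟫‖ ≤ ‖v‖ * s := fun z =>
    (norm_inner_le_norm v (φ z)).trans (by gcongr; exact hs z)
  have := ProbabilityMeasure.tendsto_iff_forall_integral_tendsto.1 hQ
    (.ofNormedAddCommGroup _ (continuous_const.inner hφ) _ hb)
  simpa only [coe_ofNormedAddCommGroup, integral_inner (hint _), integral_inner hintQ] using this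

theorem tendsto_integral_abs_inner (hQ : Tendsto QN atTop (𝓝 Q)) (hφ : Continuous φ)
    (hs : ∀ z, ‖φ z‖ ≤ s) {v : ℕ → H} {r : ℝ} (hv : ∀ N, ‖v N‖ ≤ r)
    (hlim : ∀ z, Tendsto (fun N => ⟪v N, φ z⟫) atTop (𝓝 0)) :
    Tendsto (fun N => ∫ z, |⟪v N, φ z⟫| ∂(QN N : Measure Ω)) atTop (𝓝 0) := by
  have hlip : ∀ N z w, dist |⟪v N, φ z⟫| |⟪v N, φ w⟫| ≤ r * ‖φ z - φ w‖ := fun N z w =>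
    calc dist |⟪v N, φ z⟫| |⟪v N, φ w⟫| ≤ |⟪v N, φ z⟫ - ⟪v N, φ w⟫| := abs_abs_sub_abs_le _ _
      _ = |⟪v N, φ z - φ w⟫| := by rw [inner_sub_right]
      _ ≤ ‖v N‖ * ‖φ z - φ w‖ := abs_real_inner_le_norm _ _
      _ ≤ r * ‖φ z - φ w‖ := by gcongr; exact hv N
  have hequi : Equicontinuous fun N z => |⟪v N, φ z⟫| := fun z => by
    refine Metric.equicontinuousAt_of_continuity_modulus (fun w => r * ‖φ z - φ w‖) ?_ _
      (.of_forall fun w N => hlip N z w)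
    simpa using ((tendsto_const_nhds (x := φ z)).sub (hφ.tendsto z)).norm.const_mul r
  have hbound : ∀ N z, |⟪v N, φ z⟫| ≤ r * s := fun N z =>
    (abs_real_inner_le_norm _ _).trans
      (mul_le_mul (hv N) (hs z) (norm_nonneg _) ((norm_nonneg _).trans (hv N)))
  exact tendsto_integral_of_equicontinuous hQ hequi (fun _ _ => abs_nonneg _) hbound
    fun z => by simpa using (hlim z).abs

/-- With `m_N, m` the mean embeddings, `‖m_N - m‖² = ⟪m_N - m, m_N⟫ - ⟪m_N - m, m⟫`; the second
term vanishes by weak convergence in `H`, and the first is bounded by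
`∫ |⟪m_N - m, φ⟫| dQ_N`. -/
theorem tendsto_norm_integral_sub [CompleteSpace H] (hQ : Tendsto QN atTop (𝓝 Q))
    (hφ : Continuous φ) (hs : ∀ z, ‖φ z‖ ≤ s) (hint : ∀ N, Integrable φ (QN N : Measure Ω))
    (hintQ : Integrable φ (Q : Measure Ω)) :
    Tendsto (fun N => ‖(∫ z, φ z ∂(QN N : Measure Ω)) - ∫ z, φ z ∂(Q : Measure Ω)‖) atTop
      (𝓝 0) := by
  set m : ℕ → H := fun N => ∫ z, φ z ∂(QN N : Measure Ω)
  set m₀ : H := ∫ z, φ z ∂(Q : Measure Ω)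
  have hweak : ∀ v, Tendsto (fun N => ⟪v, m N⟫ - ⟪v, m₀⟫) atTop (𝓝 0) := fun v =>
    tendsto_sub_nhds_zero_iff.2 (tendsto_inner_integral hQ hφ hs hint hintQ v)
  have hm_le : ∀ μ : ProbabilityMeasure Ω, ‖∫ z, φ z ∂(μ : Measure Ω)‖ ≤ s := fun μ => by
    simpa using norm_integral_le_of_norm_le_const (μ := (μ : Measure Ω)) (ae_of_all _ hs)
  have hd_le : ∀ N, ‖m N - m₀‖ ≤ 2 * s := fun N =>
    (norm_sub_le _ _).trans (by linarith [hm_le (QN N), hm_le Q])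
  have hfirst : Tendsto (fun N => ⟪m N - m₀, m N⟫) atTop (𝓝 0) := by
    refine squeeze_zero_norm (fun N => ?_) (tendsto_integral_abs_inner hQ hφ hs hd_le fun z => ?_)
    · rw [← integral_inner (hint N), Real.norm_eq_abs]
      exact abs_integral_le_integral_abs
    · simpa only [← inner_sub_right, real_inner_comm (φ z)] using hweak (φ z)
  have hsecond : Tendsto (fun N => ⟪m N - m₀, m₀⟫) atTop (𝓝 0) :=
    (hweak m₀).congr fun N => by rw [← inner_sub_right, real_inner_comm]
  have hsq : Tendsto (fun N => ‖m N - m₀‖ ^ 2) atTop (𝓝 0) := by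
    simpa only [sub_zero, ← real_inner_self_eq_norm_sq, ← inner_sub_right] using
      hfirst.sub hsecond
  simpa [Real.sqrt_sq (norm_nonneg _)] using hsq.sqrt

end MeasureTheory.ProbabilityMeasure

section Metrizing

variable {X H : Type*} [TopologicalSpace X] [MetrizableSpace X] [MeasurableSpace X] [BorelSpace X]
  [NormedAddCommGroup H] [InnerProductSpace ℝ H]

def MetrizesWeakConvergence (φ : X → H) : Prop :=
  ∀ (QN : ℕ → ProbabilityMeasure X) (Q : ProbabilityMeasure X),
    Tendsto (fun N => ‖(∫ x, φ x ∂(QN N : Measure X)) - ∫ x, φ x ∂(Q : Measure X)‖) atTop (𝓝 0)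
      ↔ Tendsto QN atTop (𝓝 Q)

namespace MetrizesWeakConvergence

variable {φ : X → H} (hφ : MetrizesWeakConvergence φ)
include hφ

theorem eq_of_integral_eq {Q Q' : ProbabilityMeasure X}
    (h : ∫ x, φ x ∂(Q : Measure X) = ∫ x, φ x ∂(Q' : Measure X)) : Q = Q' :=
  tendsto_nhds_unique tendsto_const_nhds ((hφ (fun _ => Q) Q').1 (by simp [h]))

theorem tendsto_of_tendsto_comp [CompleteSpace H] {w : ℕ → X} {x : X}
    (h : Tendsto (φ ∘ w) atTop (𝓝 (φ x))) : Tendsto w atTop (𝓝 x) := by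
  have hd : Tendsto (diracProba ∘ w) atTop (𝓝 (diracProba x)) :=
    (hφ _ _).1 (by simpa [diracProba, integral_dirac] using tendsto_iff_norm_sub_tendsto_zero.1 h)
  simpa using (tendsto_diracProba_iff_tendsto (map w atTop)).1 (tendsto_map'_iff.2 hd)

/-- If `φ` were not a.e. strongly measurable for `Q`, then neither would it be for the mixture
`Q / 2 + δ_a / 2`; both embeddings would be the junk value `0`, forcing `Q` to equal the
mixture, hence `Q = δ_a`. -/
theorem aestronglyMeasurable (Q : ProbabilityMeasure X) : AEStronglyMeasurable φ Q := by
  by_contra hQ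
  obtain ⟨a⟩ := nonempty_of_isProbabilityMeasure (Q : Measure X)
  let ν : ProbabilityMeasure X :=
    ⟨(2⁻¹ : ℝ≥0∞) • (Q : Measure X) + (2⁻¹ : ℝ≥0∞) • Measure.dirac a,
      ⟨by simp [ENNReal.inv_two_add_inv_two]⟩⟩
  have hQν : (Q : Measure X) ≪ ν := (Measure.absolutelyContinuous_smul (by simp)).add_right _
  have hνQ : ν = Q := hφ.eq_of_integral_eq <| by
    rw [integral_undef fun h => hQ (h.aestronglyMeasurable.mono_ac hQν),
      integral_undef fun h => hQ h.aestronglyMeasurable]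
  have hcompl : (Q : Measure X) {a}ᶜ = 0 := by
    by_contra h0
    refine (by norm_num : (2⁻¹ : ℝ≥0∞) ≠ 1) ((ENNReal.mul_eq_right h0 (measure_ne_top _ _)).1 ?_)
    simpa [ν] using congrArg (fun μ : ProbabilityMeasure X => (μ : Measure X) {a}ᶜ) hνQ
  refine hQ ((aestronglyMeasurable_const (b := φ a)).congr ?_)
  filter_upwards [mem_ae_iff.2 hcompl] with x (hx : x = a)
  rw [hx]

theorem exists_isSeparable_ae_mem [CompleteSpace H] (Q : ProbabilityMeasure X) :
    ∃ S : Set X, IsSeparable S ∧ ∀ᵐ x ∂(Q : Measure X), x ∈ S := by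
  obtain ⟨T, hT, hφT⟩ := (hφ.aestronglyMeasurable Q).isSeparable_ae_range
  exact ⟨φ ⁻¹' T,
    isSeparable_preimage_of_tendsto_comp (fun _ _ => hφ.tendsto_of_tendsto_comp) hT, hφT⟩

theorem integrable_map [CompleteSpace H] {Z E : Type*} [TopologicalSpace Z]
    [PseudoMetrizableSpace Z] [MeasurableSpace Z] [BorelSpace Z] [NormedAddCommGroup E]
    (Q : ProbabilityMeasure X) {g : X → Z} (hg : Continuous g) {ψ : Z → E} (hψ : Continuous ψ) {C : ℝ}
    (hψC : ∀ z, ‖ψ z‖ ≤ C) : Integrable ψ ((Q : Measure X).map g) := by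
  obtain ⟨S, hS, hQS⟩ := hφ.exists_isSeparable_ae_mem Q
  have := Measure.isProbabilityMeasure_map (μ := (Q : Measure X)) hg.aemeasurable
  refine hψ.integrable_of_ae_mem_isSeparable hψC (hS.image hg).closure ?_
  exact (mem_ae_map_iff hg.aemeasurable isClosed_closure.measurableSet).2
    (hQS.mono fun x hx => subset_closure (mem_image_of_mem g hx))

end MetrizesWeakConvergence

end Metrizing

theorem embedding_convergence_of_pushforward_general
    {X Z : Type*} [MetricSpace X] [MeasurableSpace X] [BorelSpace X]
    [MetricSpace Z] [MeasurableSpace Z] [BorelSpace Z]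
    {HX HZ : Type*} [NormedAddCommGroup HX] [InnerProductSpace ℝ HX] [CompleteSpace HX]
    [NormedAddCommGroup HZ] [InnerProductSpace ℝ HZ] [CompleteSpace HZ]
    (g : X → Z) (hg : Continuous g)
    (φX : X → HX) (φZ : Z → HZ)
    (hKZcont : Continuous fun p : Z × Z => (inner ℝ (φZ p.1) (φZ p.2) : ℝ))
    (cZ : ℝ)
    (hKZbdd : ∀ z z' : Z, |(inner ℝ (φZ z) (φZ z') : ℝ)| ≤ cZ)
    (hmetrize : ∀ (QN : ℕ → ProbabilityMeasure X) (Q : ProbabilityMeasure X),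
      Tendsto (fun N => ‖(∫ x, φX x ∂(QN N : Measure X)) - ∫ x, φX x ∂(Q : Measure X)‖)
          atTop (nhds 0)
        ↔ Tendsto QN atTop (nhds Q))
    (PN : ℕ → ProbabilityMeasure X) (P : ProbabilityMeasure X)
    (h : Tendsto (fun N => ‖(∫ x, φX x ∂(PN N : Measure X)) - ∫ x, φX x ∂(P : Measure X)‖)
      atTop (nhds 0)) :
    Tendsto (fun N => ‖(∫ z, φZ z ∂((PN N : Measure X).map g))
        - ∫ z, φZ z ∂((P : Measure X).map g)‖) atTop (nhds 0) := by
  have hφX : MetrizesWeakConvergence φX := hmetrize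
  have hφZ : Continuous φZ := continuous_of_continuous_inner hKZcont
  have hφZ_le : ∀ z, ‖φZ z‖ ≤ √cZ := fun z =>
    Real.le_sqrt_of_sq_le ((real_inner_self_eq_norm_sq (φZ z)).symm.trans_le
      ((le_abs_self _).trans (hKZbdd z z)))
  have hint : ∀ Q : ProbabilityMeasure X, Integrable φZ ((Q : Measure X).map g) :=
    fun Q => hφX.integrable_map Q hg hφZ hφZ_le
  have hPN : Tendsto (fun N => (PN N).map hg.aemeasurable) atTop (𝓝 (P.map hg.aemeasurable)) :=
    ProbabilityMeasure.tendsto_map_of_tendsto_of_continuous PN P ((hmetrize PN P).1 h) hg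
  simpa using ProbabilityMeasure.tendsto_norm_integral_sub hPN hφZ hφZ_le
    (fun N => by simpa using hint (PN N)) (by simpa using hint P)

/-- Consistency of RKHS embeddings of functions of random variables (Theorem 1 of the
paper, after Simon-Gabriel and Schölkopf): let `g : X → Z` be continuous, let
`φX : X → HX` and `φZ : Z → HZ` be feature maps whose kernels are continuous and
bounded, and suppose the kernel on `X` metrizes weak convergence of probability
measures (embedding convergence is equivalent to weak convergence). Then convergence
of mean embeddings `μX[P_N] → μX[P]` implies convergence of the mean embeddings of the
pushforwards `μZ[g_*P_N] → μZ[g_*P]`. -/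
theorem embedding_convergence_of_pushforward
    {X Z : Type*} [MetricSpace X] [MeasurableSpace X] [BorelSpace X]
    [MetricSpace Z] [MeasurableSpace Z] [BorelSpace Z]
    {HX HZ : Type*} [NormedAddCommGroup HX] [InnerProductSpace ℝ HX] [CompleteSpace HX]
    [NormedAddCommGroup HZ] [InnerProductSpace ℝ HZ] [CompleteSpace HZ]
    (g : X → Z) (hg : Continuous g)
    (φX : X → HX) (φZ : Z → HZ)
    (hKXcont : Continuous fun p : X × X => (inner ℝ (φX p.1) (φX p.2) : ℝ))
    (hKZcont : Continuous fun p : Z × Z => (inner ℝ (φZ p.1) (φZ p.2) : ℝ))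
    (cX cZ : ℝ)
    (hKXbdd : ∀ x x' : X, |(inner ℝ (φX x) (φX x') : ℝ)| ≤ cX)
    (hKZbdd : ∀ z z' : Z, |(inner ℝ (φZ z) (φZ z') : ℝ)| ≤ cZ)
    (hmetrize : ∀ (QN : ℕ → ProbabilityMeasure X) (Q : ProbabilityMeasure X),
      Tendsto (fun N => ‖(∫ x, φX x ∂(QN N : Measure X)) - ∫ x, φX x ∂(Q : Measure X)‖)
          atTop (nhds 0)
        ↔ Tendsto QN atTop (nhds Q))
    (PN : ℕ → ProbabilityMeasure X) (P : ProbabilityMeasure X)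
    (h : Tendsto (fun N => ‖(∫ x, φX x ∂(PN N : Measure X)) - ∫ x, φX x ∂(P : Measure X)‖)
      atTop (nhds 0)) :
    Tendsto (fun N => ‖(∫ z, φZ z ∂((PN N : Measure X).map g))
        - ∫ z, φZ z ∂((P : Measure X).map g)‖) atTop (nhds 0) :=
  embedding_convergence_of_pushforward_general g hg φX φZ hKZcont cZ hKZbdd hmetrize PN P h
end

section
/- Let X be a measurable space, H a real Hilbert space, and φ : X → H a measurable feature map with kernel K(x,y) = ⟨φ(x), φ(y)⟩_H satisfying 0 ≤ K(x,y) ≤ c₀ for all x, y and some constant c₀ > 0. Let P and Q be probability measures on X, let x₁,…,x_N be i.i.d. samples from P and y₁,…,y_N be i.i.d. samples from Q, independent of each other. Define the empirical MMD as MMD_emp = ‖(1/N)∑_{j=1}^N φ(x_j) − (1/N)∑_{j=1}^N φ(y_j)‖_H and the population MMD as MMD = ‖μ[P] − μ[Q]‖_H where μ[P] = ∫ φ dP. Then for every ε > 0, with probability greater than 1 − exp(−ε²N/(4c₀)) over the draw of the two samples, |MMD_emp − MMD| ≤ 2(2√(c₀/N) + ε). -/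
/-!
Center the features: with `m = ∫ φ dP`, the vectors `ξⱼ = φ(xⱼ) - m` are i.i.d., centered,
bounded by `√(2c₀)` (this is where `K ≥ 0` enters, through `⟪φ x, m⟫ ≥ 0`) and have second
moment at most `c₀`. The error `|MMD_emp - MMD|` is at most `‖N⁻¹ ∑ ξⱼ‖ + ‖N⁻¹ ∑ ηⱼ‖`, so it
suffices that each term exceeds `2√(c₀/N) + ε` with probability less than `exp(-ε²N/(4c₀))/2`.
Write the threshold for `Sₙ = ∑ ξⱼ` as `√(c₀N)(2 + v)`. For `v ≤ 1`, Chebyshev's inequality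
suffices. For `v > 1`, apply Markov's inequality to `exp(κ‖Sₙ‖²)`: integrating out one summand and
applying Hoeffding's lemma to `⟪ξ, s⟫` gives `E exp(κ‖ξ + s‖²) ≤ exp(κb²) exp(κ(1 + 2κb²)‖s‖²)`.
Induction on `n` then gives `(E exp(κ‖Sₙ‖²))² (1 - 2κb²n) ≤ 1`.
-/

open MeasureTheory ProbabilityTheory Real Set

theorem measureReal_lt_le_integral_div {Z : Type*} [MeasurableSpace Z] {ν : Measure Z}
    [IsFiniteMeasure ν] {g : Z → ℝ} {f : ℝ → ℝ} (hf_mono : MonotoneOn f (Ici 0))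
    (hf_nonneg : ∀ r, 0 ≤ f r) (hg : ∀ z, 0 ≤ g z) (hint : Integrable (fun z ↦ f (g z)) ν)
    {s : ℝ} (hs : 0 ≤ s) (hfs : 0 < f s) :
    ν.real {z | s < g z} ≤ (∫ z, f (g z) ∂ν) / f s := by
  rw [le_div_iff₀ hfs, mul_comm]
  calc f s * ν.real {z | s < g z} ≤ f s * ν.real {z | f s ≤ f (g z)} :=
        mul_le_mul_of_nonneg_left
          (measureReal_mono (μ := ν) fun z (hz : s < g z) ↦ hf_mono hs (hg z) hz.le) hfs.le
    _ ≤ ∫ z, f (g z) ∂ν :=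
        mul_meas_ge_le_integral_of_nonneg (ae_of_all _ fun z ↦ hf_nonneg _) hint _

theorem monotoneOn_exp_mul_sq {κ : ℝ} (hκ : 0 ≤ κ) :
    MonotoneOn (fun r : ℝ ↦ exp (κ * r ^ 2)) (Ici 0) :=
  fun _ hr _ _ hrt ↦ exp_le_exp.2 (mul_le_mul_of_nonneg_left (pow_le_pow_left₀ hr hrt 2) hκ)

theorem one_div_sq_two_add_lt_exp {v : ℝ} (hv0 : 0 < v) (hv1 : v ≤ 1) :
    1 / (2 + v) ^ 2 < exp (-v ^ 2 / 4) / 2 := by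
  have h := one_sub_le_exp_neg (v ^ 2 / 4)
  rw [← neg_div] at h
  have hexp : 3 / 4 ≤ exp (-v ^ 2 / 4) := by nlinarith
  have hsq : 4 < (2 + v) ^ 2 := by nlinarith
  rw [div_lt_iff₀ (by positivity)]
  nlinarith

theorem two_mul_sq_two_add_lt_exp {v : ℝ} (hv : 1 < v) : 2 * (2 + v) ^ 2 < exp (1 + 2 * v) := by
  have he3 : 20 < exp 3 := by
    have h := pow_lt_pow_left₀ exp_one_gt_d9 (by norm_num) three_ne_zero
    rw [← exp_nat_mul] at h
    norm_num at h
    linarith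
  have hv' : v ≤ exp (v - 1) := by linarith [add_one_le_exp (v - 1)]
  calc 2 * (2 + v) ^ 2 < 20 * v ^ 2 := by nlinarith
    _ ≤ exp 3 * exp (v - 1) ^ 2 := by gcongr
    _ = exp (1 + 2 * v) := by rw [← exp_nat_mul, ← exp_add]; push_cast; ring_nf

section IIDSums

variable {X H : Type*} [NormedAddCommGroup H] {ξ : X → H} {b : ℝ}

theorem norm_sum_comp_le (hbd : ∀ x, ‖ξ x‖ ≤ b) {n : ℕ} (z : Fin n → X) :
    ‖∑ j, ξ (z j)‖ ≤ n * b := by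
  simpa using norm_sum_le_of_le Finset.univ fun j _ ↦ hbd (z j)

variable [MeasurableSpace X] {P : Measure X}

theorem integral_pi_fin_succ {n : ℕ} [SigmaFinite P] {f : (Fin (n + 1) → X) → ℝ}
    (hf : Integrable f (Measure.pi fun _ ↦ P)) :
    ∫ z, f z ∂(Measure.pi fun _ ↦ P) = ∫ w, ∫ x, f (Fin.cons x w) ∂P ∂(Measure.pi fun _ ↦ P) := by
  have e := (measurePreserving_piFinSuccAbove (fun _ : Fin (n + 1) ↦ P) 0).symm
  rw [← e.integral_comp', integral_prod_symm]
  · simp only [MeasurableEquiv.piFinSuccAbove_symm_apply, Fin.insertNthEquiv, Fin.zero_succAbove,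
      Fin.insertNth_zero', Fin.removeNth_zero, Equiv.coe_fn_mk]
  · exact (e.integrable_comp_emb (MeasurableEquiv.measurableEmbedding _)).2 hf

theorem MeasureTheory.StronglyMeasurable.sum_comp_apply (hξ : StronglyMeasurable ξ) (n : ℕ) :
    StronglyMeasurable fun z : Fin n → X ↦ ∑ j, ξ (z j) :=
  Finset.stronglyMeasurable_fun_sum _ fun j _ ↦ hξ.comp_measurable (measurable_pi_apply j)

theorem integrable_comp_norm_sum [IsFiniteMeasure P] (hξ : StronglyMeasurable ξ)
    (hbd : ∀ x, ‖ξ x‖ ≤ b) {f : ℝ → ℝ} (hf : Continuous f) (hf_mono : MonotoneOn f (Ici 0))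
    (n : ℕ) : Integrable (fun z ↦ f ‖∑ j, ξ (z j)‖) (Measure.pi fun _ : Fin n ↦ P) := by
  refine .of_bound (hf.comp_stronglyMeasurable (hξ.sum_comp_apply n).norm).aestronglyMeasurable
    (max |f 0| |f (n * b)|) (ae_of_all _ fun z ↦ ?_)
  have h0 : (0 : ℝ) ≤ ‖∑ j, ξ (z j)‖ := norm_nonneg _
  have hnb := norm_sum_comp_le hbd z
  exact abs_le_max_abs_abs (hf_mono (mem_Ici.2 le_rfl) h0 h0) (hf_mono h0 (h0.trans hnb) hnb)

theorem integral_comp_norm_sum_succ_le [IsFiniteMeasure P] (hξ : StronglyMeasurable ξ)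
    (hbd : ∀ x, ‖ξ x‖ ≤ b) {f g : ℝ → ℝ} (hf : Continuous f) (hf_mono : MonotoneOn f (Ici 0))
    (hf_nonneg : ∀ r, 0 ≤ f r) (hg : Continuous g) (hg_mono : MonotoneOn g (Ici 0))
    (hstep : ∀ s : H, ∫ x, f ‖ξ x + s‖ ∂P ≤ g ‖s‖) (n : ℕ) :
    ∫ z, f ‖∑ j, ξ (z j)‖ ∂(Measure.pi fun _ : Fin (n + 1) ↦ P)
      ≤ ∫ w, g ‖∑ j, ξ (w j)‖ ∂(Measure.pi fun _ : Fin n ↦ P) := by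
  rw [integral_pi_fin_succ (integrable_comp_norm_sum hξ hbd hf hf_mono _)]
  refine integral_mono_of_nonneg (ae_of_all _ fun w ↦ integral_nonneg fun x ↦ hf_nonneg _)
    (integrable_comp_norm_sum hξ hbd hg hg_mono n) (ae_of_all _ fun w ↦ ?_)
  simpa [Fin.sum_univ_succ] using hstep (∑ j, ξ (w j))

variable [InnerProductSpace ℝ H] [CompleteSpace H]

theorem integral_inner_eq_zero_of_integral_eq_zero (hξ : Integrable ξ P) (h0 : ∫ x, ξ x ∂P = 0)
    (s : H) : ∫ x, inner ℝ (ξ x) s ∂P = 0 := by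
  simp_rw [real_inner_comm s]
  rw [integral_inner hξ, h0, inner_zero_right]

variable [IsProbabilityMeasure P]

theorem integral_norm_add_sq (hξ : MemLp ξ 2 P) (h0 : ∫ x, ξ x ∂P = 0) (s : H) :
    ∫ x, ‖ξ x + s‖ ^ 2 ∂P = ∫ x, ‖ξ x‖ ^ 2 ∂P + ‖s‖ ^ 2 := by
  have hξ1 : Integrable ξ P := hξ.integrable one_le_two
  have hξ2 : Integrable (fun x ↦ ‖ξ x‖ ^ 2) P := hξ.integrable_norm_pow two_ne_zero
  have hinner : Integrable (fun x ↦ 2 * inner ℝ (ξ x) s) P := (hξ1.inner_const s).const_mul 2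
  simp_rw [norm_add_sq_real]
  rw [integral_add (by exact hξ2.add hinner) (integrable_const _), integral_add hξ2 hinner,
    integral_const_mul, integral_inner_eq_zero_of_integral_eq_zero hξ1 h0]
  simp

theorem integral_norm_sum_sq_le (hξ : StronglyMeasurable ξ) (hbd : ∀ x, ‖ξ x‖ ≤ b)
    (h0 : ∫ x, ξ x ∂P = 0) (n : ℕ) :
    ∫ z, ‖∑ j, ξ (z j)‖ ^ 2 ∂(Measure.pi fun _ : Fin n ↦ P) ≤ n * ∫ x, ‖ξ x‖ ^ 2 ∂P := by
  set σ2 := ∫ x, ‖ξ x‖ ^ 2 ∂P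
  have hsq : MonotoneOn (fun r : ℝ ↦ r ^ 2) (Ici 0) := pow_left_monotoneOn
  induction n with
  | zero => simp
  | succ n ih =>
    calc ∫ z, ‖∑ j, ξ (z j)‖ ^ 2 ∂(Measure.pi fun _ : Fin (n + 1) ↦ P)
        ≤ ∫ w, (σ2 + ‖∑ j, ξ (w j)‖ ^ 2) ∂(Measure.pi fun _ : Fin n ↦ P) := by
          refine integral_comp_norm_sum_succ_le hξ hbd (continuous_pow 2) hsq (fun r ↦ sq_nonneg r)
            (g := fun r ↦ σ2 + r ^ 2) (by fun_prop) (fun r hr t ht hrt ↦ ?_) (fun s ↦ ?_) n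
          · exact add_le_add_right (hsq hr ht hrt) σ2
          · rw [integral_norm_add_sq (.of_bound hξ.aestronglyMeasurable b (ae_of_all _ hbd)) h0 s]
      _ = σ2 + ∫ w, ‖∑ j, ξ (w j)‖ ^ 2 ∂(Measure.pi fun _ : Fin n ↦ P) := by
          rw [integral_add (integrable_const _)
            (integrable_comp_norm_sum hξ hbd (continuous_pow 2) hsq n)]
          simp
      _ ≤ (n + 1 : ℕ) * σ2 := by push_cast; linarith

theorem integral_exp_mul_norm_add_sq_le (hξ : StronglyMeasurable ξ) (hbd : ∀ x, ‖ξ x‖ ≤ b)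
    (h0 : ∫ x, ξ x ∂P = 0) {κ : ℝ} (hκ : 0 ≤ κ) (s : H) :
    ∫ x, exp (κ * ‖ξ x + s‖ ^ 2) ∂P
      ≤ exp (κ * b ^ 2) * exp ((κ + 2 * κ ^ 2 * b ^ 2) * ‖s‖ ^ 2) := by
  set Y := fun x ↦ inner ℝ (ξ x) s
  have hY_bd : ∀ x, Y x ∈ Icc (-(b * ‖s‖)) (b * ‖s‖) := fun x ↦ abs_le.1 <|
    (abs_real_inner_le_norm _ _).trans (mul_le_mul_of_nonneg_right (hbd x) (norm_nonneg s))
  have hY := hasSubgaussianMGF_of_mem_Icc_of_integral_eq_zero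
    (hξ.inner stronglyMeasurable_const).aemeasurable (ae_of_all P hY_bd)
    (integral_inner_eq_zero_of_integral_eq_zero
      (.of_bound hξ.aestronglyMeasurable b (ae_of_all _ hbd)) h0 s)
  have hpt : ∀ x, exp (κ * ‖ξ x + s‖ ^ 2) ≤ exp (κ * b ^ 2 + κ * ‖s‖ ^ 2) * exp (2 * κ * Y x) := by
    intro x
    rw [← exp_add, exp_le_exp, norm_add_sq_real]
    have := pow_le_pow_left₀ (norm_nonneg _) (hbd x) 2
    nlinarith
  calc ∫ x, exp (κ * ‖ξ x + s‖ ^ 2) ∂P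
      ≤ ∫ x, exp (κ * b ^ 2 + κ * ‖s‖ ^ 2) * exp (2 * κ * Y x) ∂P :=
        integral_mono_of_nonneg (ae_of_all _ fun x ↦ (exp_pos _).le)
          ((hY.integrable_exp_mul _).const_mul _) (ae_of_all _ hpt)
    _ = exp (κ * b ^ 2 + κ * ‖s‖ ^ 2) * mgf Y P (2 * κ) := integral_const_mul _ _
    _ ≤ exp (κ * b ^ 2 + κ * ‖s‖ ^ 2) * exp ((b * ‖s‖) ^ 2 * (2 * κ) ^ 2 / 2) := by
        gcongr
        refine (hY.mgf_le (2 * κ)).trans_eq ?_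
        simp [← two_mul, mul_pow]
    _ = exp (κ * b ^ 2) * exp ((κ + 2 * κ ^ 2 * b ^ 2) * ‖s‖ ^ 2) := by
        rw [← exp_add, ← exp_add]
        ring_nf

theorem sq_integral_exp_mul_norm_sum_sq_mul_le (hξ : StronglyMeasurable ξ)
    (hbd : ∀ x, ‖ξ x‖ ≤ b) (h0 : ∫ x, ξ x ∂P = 0) (n : ℕ) {κ : ℝ} (hκ : 0 ≤ κ)
    (hκn : 2 * κ * b ^ 2 * n < 1) :
    (∫ z, exp (κ * ‖∑ j, ξ (z j)‖ ^ 2) ∂(Measure.pi fun _ : Fin n ↦ P)) ^ 2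
      * (1 - 2 * κ * b ^ 2 * n) ≤ 1 := by
  induction n generalizing κ with
  | zero => simp
  | succ n ih =>
    set a := 2 * κ * b ^ 2
    set κ' := κ + 2 * κ ^ 2 * b ^ 2
    have ha : 0 ≤ a := by positivity
    have hκ' : 0 ≤ κ' := by positivity
    have ha' : 2 * κ' * b ^ 2 = a + a ^ 2 := by ring
    push_cast at hκn ⊢
    set F := ∫ z, exp (κ * ‖∑ j, ξ (z j)‖ ^ 2) ∂(Measure.pi fun _ : Fin (n + 1) ↦ P)
    set F' := ∫ w, exp (κ' * ‖∑ j, ξ (w j)‖ ^ 2) ∂(Measure.pi fun _ : Fin n ↦ P)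
    have hF : F ≤ exp (κ * b ^ 2) * F' := by
      rw [← integral_const_mul]
      exact integral_comp_norm_sum_succ_le hξ hbd (by fun_prop) (monotoneOn_exp_mul_sq hκ)
        (fun r ↦ (exp_pos _).le) (g := fun r ↦ exp (κ * b ^ 2) * exp (κ' * r ^ 2)) (by fun_prop)
        (fun r hr t ht hrt ↦
          mul_le_mul_of_nonneg_left (monotoneOn_exp_mul_sq hκ' hr ht hrt) (exp_pos _).le)
        (integral_exp_mul_norm_add_sq_le hξ hbd h0 hκ) n
    have hF_sq : F ^ 2 ≤ exp a * F' ^ 2 := by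
      calc F ^ 2 ≤ (exp (κ * b ^ 2) * F') ^ 2 :=
            pow_le_pow_left₀ (integral_nonneg fun z ↦ (exp_pos _).le) hF 2
        _ = exp a * F' ^ 2 := by
          rw [mul_pow, ← exp_nat_mul, show ((2 : ℕ) : ℝ) * (κ * b ^ 2) = a by push_cast; ring]
    have hn : (0 : ℝ) ≤ n := n.cast_nonneg
    have hexp : exp a * (1 - a * (n + 1)) ≤ 1 - (a + a ^ 2) * n := by
      have h1 := mul_le_mul_of_nonneg_left (one_sub_le_exp_neg a) (exp_pos a).le
      rw [mul_comm, ← exp_add, add_neg_cancel, exp_zero] at h1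
      nlinarith [mul_le_mul_of_nonneg_right (add_one_le_exp a) (mul_nonneg ha hn)]
    calc F ^ 2 * (1 - a * (n + 1)) ≤ exp a * F' ^ 2 * (1 - a * (n + 1)) := by
          gcongr
      _ ≤ F' ^ 2 * (1 - 2 * κ' * b ^ 2 * n) := by
          rw [ha']
          nlinarith [sq_nonneg F']
      _ ≤ 1 := ih hκ' (by rw [ha']; nlinarith)

theorem measureReal_lt_norm_sum_le_div_sq (hξ : StronglyMeasurable ξ) (hbd : ∀ x, ‖ξ x‖ ≤ b)
    (h0 : ∫ x, ξ x ∂P = 0) (n : ℕ) {s : ℝ} (hs : 0 < s) :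
    (Measure.pi fun _ : Fin n ↦ P).real {z | s < ‖∑ j, ξ (z j)‖}
      ≤ n * (∫ x, ‖ξ x‖ ^ 2 ∂P) / s ^ 2 :=
  (measureReal_lt_le_integral_div pow_left_monotoneOn (fun r ↦ sq_nonneg r)
    (fun z ↦ norm_nonneg _) (integrable_comp_norm_sum hξ hbd (continuous_pow 2)
      pow_left_monotoneOn n) hs.le (by positivity)).trans
    (div_le_div_of_nonneg_right (integral_norm_sum_sq_le hξ hbd h0 n) (sq_nonneg s))

theorem sq_measureReal_lt_norm_sum_mul_le (hξ : StronglyMeasurable ξ) (hbd : ∀ x, ‖ξ x‖ ≤ b)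
    (h0 : ∫ x, ξ x ∂P = 0) (n : ℕ) {κ : ℝ} (hκ : 0 ≤ κ) (hκn : 2 * κ * b ^ 2 * n < 1)
    {s : ℝ} (hs : 0 ≤ s) :
    (Measure.pi fun _ : Fin n ↦ P).real {z | s < ‖∑ j, ξ (z j)‖} ^ 2 * (1 - 2 * κ * b ^ 2 * n)
      ≤ exp (-(2 * κ * s ^ 2)) := by
  set p := (Measure.pi fun _ : Fin n ↦ P).real {z | s < ‖∑ j, ξ (z j)‖}
  set F := ∫ z, exp (κ * ‖∑ j, ξ (z j)‖ ^ 2) ∂(Measure.pi fun _ : Fin n ↦ P)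
  have hp : p ≤ F / exp (κ * s ^ 2) :=
    measureReal_lt_le_integral_div (monotoneOn_exp_mul_sq hκ) (fun r ↦ (exp_pos _).le)
      (fun z ↦ norm_nonneg _) (integrable_comp_norm_sum hξ hbd (by fun_prop)
        (monotoneOn_exp_mul_sq hκ) n) hs (exp_pos _)
  have hp_sq : p ^ 2 ≤ F ^ 2 * exp (-(2 * κ * s ^ 2)) := by
    calc p ^ 2 ≤ (F / exp (κ * s ^ 2)) ^ 2 := pow_le_pow_left₀ measureReal_nonneg hp 2
      _ = F ^ 2 * exp (-(2 * κ * s ^ 2)) := by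
        rw [div_pow, ← exp_nat_mul, div_eq_mul_inv, ← exp_neg]
        push_cast
        ring_nf
  calc p ^ 2 * (1 - 2 * κ * b ^ 2 * n)
      ≤ F ^ 2 * exp (-(2 * κ * s ^ 2)) * (1 - 2 * κ * b ^ 2 * n) := by
        gcongr
    _ = exp (-(2 * κ * s ^ 2)) * (F ^ 2 * (1 - 2 * κ * b ^ 2 * n)) := by ring
    _ ≤ exp (-(2 * κ * s ^ 2)) := mul_le_of_le_one_right (exp_pos _).le
        (sq_integral_exp_mul_norm_sum_sq_mul_le hξ hbd h0 n hκ hκn)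

theorem measureReal_lt_norm_sum_lt {c : ℝ} (hc : 0 < c) (hξ : StronglyMeasurable ξ)
    (hbd : ∀ x, ‖ξ x‖ ≤ √(2 * c)) (h0 : ∫ x, ξ x ∂P = 0) (hσ : ∫ x, ‖ξ x‖ ^ 2 ∂P ≤ c)
    {n : ℕ} (hn : 0 < n) {v : ℝ} (hv : 0 < v) :
    (Measure.pi fun _ : Fin n ↦ P).real {z | √(c * n) * (2 + v) < ‖∑ j, ξ (z j)‖}
      < exp (-v ^ 2 / 4) / 2 := by
  set s := √(c * n) * (2 + v)
  have hn' : (0 : ℝ) < n := Nat.cast_pos.2 hn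
  have hs : 0 < s := by positivity
  have hs_sq : s ^ 2 = c * n * (2 + v) ^ 2 := by rw [mul_pow, sq_sqrt (by positivity)]
  rcases le_or_gt v 1 with hv1 | hv1
  · calc _ ≤ n * (∫ x, ‖ξ x‖ ^ 2 ∂P) / s ^ 2 := measureReal_lt_norm_sum_le_div_sq hξ hbd h0 n hs
      _ ≤ n * c / s ^ 2 := by gcongr
      _ = 1 / (2 + v) ^ 2 := by rw [hs_sq]; field_simp
      _ < exp (-v ^ 2 / 4) / 2 := one_div_sq_two_add_lt_exp hv hv1
  · set κ := (1 - 2 / (2 + v) ^ 2) / (4 * c * n) with hκ_def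
    have hfrac : 2 / (2 + v) ^ 2 < 1 := by rw [div_lt_one (by positivity)]; nlinarith
    have hκ : 0 ≤ κ := div_nonneg (by linarith) (by positivity)
    have hκn : 2 * κ * √(2 * c) ^ 2 * n = 1 - 2 / (2 + v) ^ 2 := by
      rw [sq_sqrt (by positivity), hκ_def]; field_simp; ring
    have h := sq_measureReal_lt_norm_sum_mul_le hξ hbd h0 n hκ
      (by rw [hκn]; linarith [show 0 < 2 / (2 + v) ^ 2 by positivity]) hs.le
    rw [hκn, sub_sub_cancel, show 2 * κ * s ^ 2 = ((2 + v) ^ 2 - 2) / 2 by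
      rw [hs_sq, hκ_def]; field_simp; ring] at h
    refine lt_of_pow_lt_pow_left₀ 2 (by positivity) ?_
    set E := exp (-(((2 + v) ^ 2 - 2) / 2))
    have hE : exp (-v ^ 2 / 4) ^ 2 = E * exp (1 + 2 * v) := by
      rw [← exp_nat_mul, ← exp_add]; push_cast; ring_nf
    rw [mul_div_assoc', div_le_iff₀ (by positivity)] at h
    rw [div_pow, hE]
    nlinarith [mul_lt_mul_of_pos_left (two_mul_sq_two_add_lt_exp hv1) (exp_pos _ : 0 < E)]

end IIDSums

theorem inv_natCast_smul_sum_sub {E : Type*} [AddCommGroup E] [Module ℝ E] {N : ℕ} (hN : N ≠ 0)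
    (f : Fin N → E) (m : E) : (N : ℝ)⁻¹ • ∑ j, f j - m = (N : ℝ)⁻¹ • ∑ j, (f j - m) := by
  rw [Finset.sum_sub_distrib, smul_sub, Finset.sum_const, Finset.card_univ, Fintype.card_fin,
    ← Nat.cast_smul_eq_nsmul ℝ, smul_smul, inv_mul_cancel₀ (Nat.cast_ne_zero.2 hN), one_smul]

theorem two_mul_sqrt_div_add_eq {c N : ℝ} (hc : 0 < c) (hN : 0 < N) (ε : ℝ) :
    2 * √(c / N) + ε = N⁻¹ * (√(c * N) * (2 + ε * √(N / c))) := by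
  have h2 : 0 < √c := sqrt_pos.2 hc
  have h3 : 0 < √N := sqrt_pos.2 hN
  rw [sqrt_div hc.le, sqrt_mul hc.le, sqrt_div hN.le]
  field_simp
  rw [sq_sqrt hN.le]
  ring

theorem abs_norm_sub_sub_norm_sub_le {E : Type*} [SeminormedAddCommGroup E] (u w m m' : E) :
    |‖u - w‖ - ‖m - m'‖| ≤ ‖u - m‖ + ‖w - m'‖ :=
  (abs_norm_sub_norm_le _ _).trans <| by
    rw [show u - w - (m - m') = (u - m) - (w - m') by abel]
    exact norm_sub_le _ _

section FeatureMap

variable {X H : Type*} [NormedAddCommGroup H] [InnerProductSpace ℝ H] {φ : X → H} {c : ℝ}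

theorem norm_le_sqrt_of_inner_self_le (hK : ∀ x, inner ℝ (φ x) (φ x) ≤ c) (x : X) :
    ‖φ x‖ ≤ √c := by
  simpa using abs_le_sqrt ((real_inner_self_eq_norm_sq (φ x)).symm.trans_le (hK x))

variable [MeasurableSpace X] [CompleteSpace H] (ν : Measure X) [IsProbabilityMeasure ν]

theorem integral_sub_integral_eq_zero (φ : X → H) : ∫ x, (φ x - ∫ y, φ y ∂ν) ∂ν = 0 := by
  simpa [average_eq_integral] using integral_sub_average ν φ

theorem integral_norm_sub_integral_sq_le (hφ : StronglyMeasurable φ)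
    (hK : ∀ x, inner ℝ (φ x) (φ x) ≤ c) :
    ∫ x, ‖φ x - ∫ y, φ y ∂ν‖ ^ 2 ∂ν ≤ c := by
  have hφ2 : MemLp φ 2 ν := .of_bound hφ.aestronglyMeasurable √c
    (ae_of_all _ (norm_le_sqrt_of_inner_self_le hK))
  have h := integral_norm_add_sq (ξ := fun x ↦ φ x - ∫ y, φ y ∂ν) (hφ2.sub (memLp_const _))
    (integral_sub_integral_eq_zero ν φ) (∫ y, φ y ∂ν)
  simp only [sub_add_cancel] at h
  have hφ_sq : ∫ x, ‖φ x‖ ^ 2 ∂ν ≤ c := by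
    refine (integral_mono (hφ2.integrable_norm_pow two_ne_zero) (integrable_const c)
      fun x ↦ ?_).trans_eq (by simp)
    exact (real_inner_self_eq_norm_sq (φ x)).symm.trans_le (hK x)
  nlinarith [sq_nonneg ‖∫ y, φ y ∂ν‖]

theorem norm_sub_integral_le_sqrt_two_mul (hφ : StronglyMeasurable φ)
    (hK : ∀ x y, 0 ≤ inner ℝ (φ x) (φ y) ∧ inner ℝ (φ x) (φ y) ≤ c) (x : X) :
    ‖φ x - ∫ y, φ y ∂ν‖ ≤ √(2 * c) := by
  have hφ_bd := norm_le_sqrt_of_inner_self_le fun x ↦ (hK x x).2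
  have hφ_int : Integrable φ ν := .of_bound hφ.aestronglyMeasurable √c (ae_of_all _ hφ_bd)
  have hm : ‖∫ y, φ y ∂ν‖ ≤ √c := by
    simpa using norm_integral_le_of_norm_le_const (μ := ν) (ae_of_all _ hφ_bd)
  have hinner : 0 ≤ inner ℝ (φ x) (∫ y, φ y ∂ν) := by
    rw [← integral_inner hφ_int]
    exact integral_nonneg fun y ↦ (hK x y).1
  refine abs_le_sqrt ?_ |>.trans' (le_abs_self _)
  rw [norm_sub_sq_real]
  have hc : 0 ≤ c := (real_inner_self_nonneg).trans (hK x x).2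
  nlinarith [pow_le_pow_left₀ (norm_nonneg _) (hφ_bd x) 2, pow_le_pow_left₀ (norm_nonneg _) hm 2,
    sq_sqrt hc]

end FeatureMap

theorem measureReal_lt_norm_inv_smul_sum_sub_integral_lt {X H Ω : Type*} [MeasurableSpace X]
    [NormedAddCommGroup H] [InnerProductSpace ℝ H] [CompleteSpace H] [MeasurableSpace Ω]
    {φ : X → H} (hφ : StronglyMeasurable φ) {c : ℝ} (hc : 0 < c)
    (hK : ∀ x y, 0 ≤ inner ℝ (φ x) (φ y) ∧ inner ℝ (φ x) (φ y) ≤ c)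
    (μ : Measure Ω) [IsProbabilityMeasure μ] (P : Measure X) [IsProbabilityMeasure P]
    {N : ℕ} (hN : 0 < N) {x : Fin N → Ω → X} (hx : ∀ j, Measurable (x j))
    (hlaw : ∀ j, μ.map (x j) = P) (hindep : iIndepFun x μ) {ε : ℝ} (hε : 0 < ε) :
    μ.real {ω | 2 * √(c / N) + ε < ‖(N : ℝ)⁻¹ • ∑ j, φ (x j ω) - ∫ a, φ a ∂P‖}
      < exp (-(ε ^ 2 * N) / (4 * c)) / 2 := by
  set m := ∫ a, φ a ∂P
  set v := ε * √(N / c)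
  have hN' : (0 : ℝ) < N := Nat.cast_pos.2 hN
  have hξ : StronglyMeasurable fun a ↦ φ a - m := hφ.sub stronglyMeasurable_const
  have hlaw_pi : μ.map (fun ω j ↦ x j ω) = Measure.pi fun _ ↦ P := by
    simp_rw [(iIndepFun_iff_map_fun_eq_pi_map fun j ↦ (hx j).aemeasurable).1 hindep, hlaw]
  have hset : {ω | 2 * √(c / N) + ε < ‖(N : ℝ)⁻¹ • ∑ j, φ (x j ω) - m‖}
      = (fun ω j ↦ x j ω) ⁻¹' {z | √(c * N) * (2 + v) < ‖∑ j, (φ (z j) - m)‖} := by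
    ext ω
    rw [mem_ofPred_eq, inv_natCast_smul_sum_sub hN.ne', norm_smul, two_mul_sqrt_div_add_eq hc hN',
      norm_inv, Real.norm_natCast, mul_lt_mul_iff_right₀ (inv_pos.2 hN')]
    rfl
  rw [hset, ← map_measureReal_apply (measurable_pi_lambda _ hx)
    (measurableSet_lt measurable_const ?_), hlaw_pi]
  · convert measureReal_lt_norm_sum_lt hc hξ (norm_sub_integral_le_sqrt_two_mul P hφ hK)
      (integral_sub_integral_eq_zero P φ)
      (integral_norm_sub_integral_sq_le P hφ fun x ↦ (hK x x).2) hN (by positivity : 0 < v) using 3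
    rw [mul_pow, sq_sqrt (by positivity)]
    field_simp
  · exact (hξ.sum_comp_apply N).norm.measurable

/-- Finite-sample guarantee for the empirical MMD (Theorem 2 of the paper): for a
measurable feature map `φ` with kernel `0 ≤ K ≤ c₀`, i.i.d. samples `x₁,…,x_N ~ P`
and `y₁,…,y_N ~ Q` independent of each other, and every `ε > 0`, with probability
greater than `1 − exp(−ε²N/(4c₀))`,
`|MMD_emp − MMD| ≤ 2(2√(c₀/N) + ε)`. -/
theorem empirical_mmd_finite_sample_guarantee
    {X : Type*} [MeasurableSpace X]
    {H : Type*} [NormedAddCommGroup H] [InnerProductSpace ℝ H] [CompleteSpace H]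
    (φ : X → H) (hφ : StronglyMeasurable φ) (c₀ : ℝ) (hc₀ : 0 < c₀)
    (hK : ∀ x y : X, 0 ≤ (inner ℝ (φ x) (φ y) : ℝ) ∧ (inner ℝ (φ x) (φ y) : ℝ) ≤ c₀)
    {Ω : Type*} [MeasurableSpace Ω] (μ : Measure Ω) [IsProbabilityMeasure μ]
    (P Q : Measure X) [IsProbabilityMeasure P] [IsProbabilityMeasure Q]
    {N : ℕ} (hN : 0 < N) (x y : Fin N → Ω → X)
    (hmeas_x : ∀ j, Measurable (x j)) (hmeas_y : ∀ j, Measurable (y j))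
    (hlaw_x : ∀ j, μ.map (x j) = P) (hlaw_y : ∀ j, μ.map (y j) = Q)
    (hindep : iIndepFun (Sum.elim x y) μ)
    (ε : ℝ) (hε : 0 < ε) :
    1 - Real.exp (-(ε ^ 2 * N) / (4 * c₀)) <
      (μ {ω | |‖(N : ℝ)⁻¹ • ∑ j, φ (x j ω) - (N : ℝ)⁻¹ • ∑ j, φ (y j ω)‖
        - ‖(∫ a, φ a ∂P) - ∫ a, φ a ∂Q‖| ≤ 2 * (2 * Real.sqrt (c₀ / N) + ε)}).toReal := by
  set t := 2 * √(c₀ / N) + ε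
  set A := {ω | t < ‖(N : ℝ)⁻¹ • ∑ j, φ (x j ω) - ∫ a, φ a ∂P‖}
  set B := {ω | t < ‖(N : ℝ)⁻¹ • ∑ j, φ (y j ω) - ∫ a, φ a ∂Q‖}
  set G := {ω | |‖(N : ℝ)⁻¹ • ∑ j, φ (x j ω) - (N : ℝ)⁻¹ • ∑ j, φ (y j ω)‖
    - ‖(∫ a, φ a ∂P) - ∫ a, φ a ∂Q‖| ≤ 2 * t}
  have hA := measureReal_lt_norm_inv_smul_sum_sub_integral_lt hφ hc₀ hK μ P hN hmeas_x hlaw_x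
    (hindep.precomp (g := Sum.inl) Sum.inl_injective) hε
  have hB := measureReal_lt_norm_inv_smul_sum_sub_integral_lt hφ hc₀ hK μ Q hN hmeas_y hlaw_y
    (hindep.precomp (g := Sum.inr) Sum.inr_injective) hε
  have hG : Gᶜ ⊆ A ∪ B := fun ω hω ↦ by
    by_contra h
    simp only [A, B, mem_union, mem_ofPred_eq, not_or, not_lt] at h
    exact hω <| (abs_norm_sub_sub_norm_sub_le _ _ _ _).trans (by linarith)
  have h1 : 1 ≤ μ.real G + (μ.real A + μ.real B) := by
    calc 1 = μ.real (G ∪ Gᶜ) := by rw [union_compl_self, probReal_univ]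
      _ ≤ μ.real G + μ.real Gᶜ := measureReal_union_le _ _
      _ ≤ μ.real G + (μ.real A + μ.real B) := by
        gcongr
        exact (measureReal_mono hG).trans (measureReal_union_le _ _)
  show _ < μ.real G
  linarith
end
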